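/- Let A ⊆ ℝ_{>0} be a DCC set and t > 0. Then inf(A_∞ ∩ (t, ∞)) > t, provided A_∞ ∩ (t,∞) is nonempty. In particular for a DCC set A ⊆ (0,1), the quantity inf(A_∞ ∩ (2,∞)) - 2 is strictly positive. -/

import Mathlib

/-- A set of reals satisfies the descending chain condition if it contains
no infinite strictly decreasing sequence. -/
def DCC (A : Set ℝ) : Prop := ∀ f : ℕ → ℝ, (∀ n, f n ∈ A) → ¬ StrictAnti f

/-- `Ainf A` is `{0}` together with all finite sums of elements of `A`. -/
def Ainf (A : Set ℝ) : Set ℝ :=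
  {0} ∪ {x | ∃ n : ℕ, 0 < n ∧ ∃ g : Fin n → ℝ, (∀ i, g i ∈ A) ∧ x = ∑ i, g i}

/-
A DCC set of nonnegative reals is partially well-ordered, and so is the additive monoid it
generates (Higman's lemma, `Set.IsPWO.addSubmonoid_closure`). Hence `Ainf A ∩ (t, ∞)` is
well-founded, so its infimum is a minimum and in particular lies in `(t, ∞)`.
-/

theorem DCC.isWF {A : Set ℝ} (h : DCC A) : A.IsWF :=
  Set.isWF_iff_no_descending_seq.2 fun f hf hmem => h f hmem hf

theorem Ainf_subset_addSubmonoidClosure (A : Set ℝ) :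
    Ainf A ⊆ AddSubmonoid.closure A := by
  rintro x (rfl | ⟨n, -, g, hg, rfl⟩)
  · exact zero_mem _
  · exact sum_mem fun i _ => AddSubmonoid.subset_closure (hg i)

theorem DCC.isWF_Ainf {A : Set ℝ} (hA : ∀ a ∈ A, 0 ≤ a) (h : DCC A) : (Ainf A).IsWF :=
  (h.isWF.isPWO.addSubmonoid_closure hA).isWF.mono (Ainf_subset_addSubmonoidClosure A)

theorem Set.IsWF.csInf_mem {α : Type*} [ConditionallyCompleteLinearOrder α] {s : Set α}
    (hs : s.IsWF) (hne : s.Nonempty) : sInf s ∈ s := by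
  rw [IsLeast.csInf_eq ⟨hs.min_mem hne, fun _ => hs.min_le hne⟩]
  exact hs.min_mem hne

theorem sInf_gt_general (A : Set ℝ) (hA : A ⊆ Set.Ioi 0) (h : DCC A) (t : ℝ)
    (hne : (Ainf A ∩ Set.Ioi t).Nonempty) :
    t < sInf (Ainf A ∩ Set.Ioi t) :=
  (((h.isWF_Ainf fun _ ha => (hA ha).le).mono Set.inter_subset_left).csInf_mem hne).2

theorem sInf_gt (A : Set ℝ) (hA : A ⊆ Set.Ioi 0) (h : DCC A) (t : ℝ)
    (ht : 0 < t) (hne : (Ainf A ∩ Set.Ioi t).Nonempty) :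
    t < sInf (Ainf A ∩ Set.Ioi t) :=
  sInf_gt_general A hA h t hne
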